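/- arXiv:1604.04448 — 3 statements merged into one kernel-verified Lean document; each statement's English description precedes it below -/
import Mathlib

section
/- Let Γ be a strongly connected digraph with diameter D ≥ 2, X a set of at least two vertices all sharing the same in-neighborhood Y, and Z = Γ⁺(X). Let Γ' be obtained from Γ by replacing the arcs from X to Z by a new set of arcs from X to Z such that (i) loops are preserved, and (ii) every vertex of X has an out-going arc to some vertex of Z and every vertex of Z has an in-going arc from some vertex of X. If there is a walk of length ℓ ≥ 2 from u to v in Γ and u ∉ X, then there is a walk of length ℓ from u to v in Γ'. -/
/-- A directed walk of length `ℓ` from `u` to `v` in the digraph with arc relation `E`. -/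
def DigraphWalk {V : Type*} (E : V → V → Prop) : ℕ → V → V → Prop
  | 0, u, v => u = v
  | (n + 1), u, v => ∃ w, E u w ∧ DigraphWalk E n w v

/-- modification of a locally line digraph preserves walks of length `ℓ ≥ 2`
starting outside `X`. -/
theorem stmt1 {V : Type*} (E E' : V → V → Prop)
    (hconn : ∀ u v : V, ∃ ℓ : ℕ, DigraphWalk E ℓ u v)
    (D : ℕ) (hD : 2 ≤ D)
    (hdiam : ∀ u v : V, ∃ ℓ ≤ D, DigraphWalk E ℓ u v)
    (hdiam' : ∃ u v : V, ∀ ℓ < D, ¬ DigraphWalk E ℓ u v)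
    (X Y Z : Set V) (hX : X.Nontrivial)
    (hY : ∀ x ∈ X, {u : V | E u x} = Y)
    (hZ : Z = {z : V | ∃ x ∈ X, E x z})
    -- arcs not emanating from `X` are unchanged
    (hout : ∀ u v : V, u ∉ X → (E' u v ↔ E u v))
    -- the new arcs from `X` still go into `Z`
    (hXZ : ∀ x ∈ X, ∀ v : V, E' x v → v ∈ Z)
    -- (i) loops remain unchanged
    (hloops : ∀ x ∈ X, (E' x x ↔ E x x))
    -- (ii) every vertex of `X` has a non-loop out-going arc to `Z`,
    --      and every vertex of `Z` has a non-loop in-going arc from `X`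
    (hXout : ∀ x ∈ X, ∃ z ∈ Z, z ≠ x ∧ E' x z)
    (hZin : ∀ z ∈ Z, ∃ x ∈ X, x ≠ z ∧ E' x z)
    (u v : V) (ℓ : ℕ) (hℓ : 2 ≤ ℓ) (hu : u ∉ X)
    (hw : DigraphWalk E ℓ u v) :
    DigraphWalk E' ℓ u v := by
  -- Key claim: any E-walk from `s` to `v` of length `n` can be converted to an
  -- E'-walk from some `w` to `v`, with `w = s` if `s ∉ X` and `w ∈ X` if `s ∈ X`.
  suffices key : ∀ (n : ℕ) (s : V), DigraphWalk E n s v →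
      ∃ w, DigraphWalk E' n w v ∧ (s ∈ X → w ∈ X) ∧ (s ∉ X → w = s) by
    obtain ⟨w, hw', _, hws⟩ := key ℓ u hw
    rwa [hws hu] at hw'
  intro n
  induction n with
  | zero =>
    intro s hs
    exact ⟨s, hs, fun h => h, fun _ => rfl⟩
  | succ m ih =>
    intro s hs
    obtain ⟨t, hst, htv⟩ := hs
    obtain ⟨w', hw'v, hwX, hwt⟩ := ih t htv
    -- find the E'-arc target: it is `w'` adjusted
    by_cases ht : t ∈ X
    · -- then `w' ∈ X` and `E s w'` since all of `X` has in-neighborhood `Y`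
      have hw'X : w' ∈ X := hwX ht
      have hsY : s ∈ Y := by rw [← hY t ht]; exact hst
      have hsw' : E s w' := by
        have := hY w' hw'X; rw [Set.ext_iff] at this
        exact (this s).mpr hsY
      by_cases hsX : s ∈ X
      · -- w' ∈ Z, reroute via hZin
        have hw'Z : w' ∈ Z := by rw [hZ]; exact ⟨s, hsX, hsw'⟩
        obtain ⟨x, hxX, _, hxw'⟩ := hZin w' hw'Z
        exact ⟨x, ⟨w', hxw', hw'v⟩, fun _ => hxX, fun h => absurd hsX h⟩
      · exact ⟨s, ⟨w', (hout s w' hsX).mpr hsw', hw'v⟩, fun h => absurd h hsX,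
          fun _ => rfl⟩
    · have hwt' : w' = t := hwt ht
      subst hwt'
      by_cases hsX : s ∈ X
      · have hw'Z : w' ∈ Z := by rw [hZ]; exact ⟨s, hsX, hst⟩
        obtain ⟨x, hxX, _, hxw'⟩ := hZin w' hw'Z
        exact ⟨x, ⟨w', hxw', hw'v⟩, fun _ => hxX, fun h => absurd hsX h⟩
      · exact ⟨s, ⟨w', (hout s w' hsX).mpr hst, hw'v⟩, fun h => absurd h hsX,
          fun _ => rfl⟩
end

section
/- Let A and A' be n × n real matrices such that A'A = A'A' and also AA' = AA (i.e., the symmetric condition holds with roles exchanged). Then A and A' have the same characteristic polynomial, hence the same spectrum. -/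
open Polynomial Matrix

/-- if `A'A = A'A'` and `AA' = AA`, then `A` and `A'` have the same
characteristic polynomial (hence the same spectrum). -/
theorem stmt6 {n : Type*} [Fintype n] [DecidableEq n]
    (A A' : Matrix n n ℝ) (h1 : A' * A = A' * A') (h2 : A * A' = A * A) :
    A.charpoly = A'.charpoly := by
  set D : Matrix n n ℝ := A - A' with hD
  have hD2 : D * D = 0 := by
    simp only [hD, Matrix.sub_mul, Matrix.mul_sub, h1, h2]
    abel
  have hA'D : A' * D = 0 := by
    simp only [hD, Matrix.mul_sub, h1, sub_self]
  have hnil : IsNilpotent D := ⟨2, by rw [pow_two]; exact hD2⟩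
  have hDcp : D.charpoly = X ^ Fintype.card n := by
    have h0 := (Matrix.isNilpotent_charpoly_sub_pow_of_isNilpotent hnil).eq_zero
    exact sub_eq_zero.mp h0
  -- key identity: charmatrix A' * charmatrix D = scalar X * charmatrix A
  have key : charmatrix A' * charmatrix D =
      Matrix.scalar n (X : ℝ[X]) * charmatrix A := by
    simp only [charmatrix]
    have hmap : (C : ℝ →+* ℝ[X]).mapMatrix A' * (C : ℝ →+* ℝ[X]).mapMatrix D = 0 := by
      rw [← RingHom.map_mul, hA'D, map_zero]
    have hcomm : ∀ M : Matrix n n ℝ[X],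
        Matrix.scalar n (X : ℝ[X]) * M = M * Matrix.scalar n (X : ℝ[X]) := by
      intro M
      rw [scalar_commute]
      intro r
      exact Commute.all _ _
    rw [Matrix.sub_mul, Matrix.mul_sub, Matrix.mul_sub, hmap, sub_zero, Matrix.mul_sub,
      ← hcomm]
    have hADsum : (C : ℝ →+* ℝ[X]).mapMatrix A =
        (C : ℝ →+* ℝ[X]).mapMatrix D + (C : ℝ →+* ℝ[X]).mapMatrix A' := by
      rw [← map_add, hD]; congr 1; abel
    rw [hADsum, Matrix.mul_add, hcomm ((C : ℝ →+* ℝ[X]).mapMatrix A')]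
    abel
  have hdet := congrArg Matrix.det key
  rw [Matrix.det_mul, Matrix.det_mul] at hdet
  have hsc : (Matrix.scalar n (X : ℝ[X])).det = X ^ Fintype.card n := by
    rw [show Matrix.scalar n (X : ℝ[X]) = Matrix.diagonal (fun _ => X) from rfl,
      Matrix.det_diagonal]
    simp [Finset.prod_const, Finset.card_univ]
  rw [← Matrix.charpoly, ← Matrix.charpoly, ← Matrix.charpoly, hDcp, hsc] at hdet
  have hX : (X : ℝ[X]) ^ Fintype.card n ≠ 0 := pow_ne_zero _ X_ne_zero
  exact (mul_left_cancel₀ hX (by rw [← hdet, mul_comm])).symm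
end

section
/- The digraphs B(2,3) and B'(2,3) are not isomorphic: B(2,3) has exactly two directed cycles of length 5, while B'(2,3) has exactly three. -/
set_option maxRecDepth 10000

def deBruijnAdj (d ℓ : ℕ) (x y : Fin ℓ → Fin d) : Prop :=
  ∀ i : Fin ℓ, ∀ h : i.val + 1 < ℓ, x ⟨i.val + 1, h⟩ = y ⟨i.val, Nat.lt_of_succ_lt h⟩

def modifiedB23Adj (x y : Fin 3 → Fin 2) : Prop :=
  (deBruijnAdj 2 3 x y ∧
    ¬ ((x = ![1,0,0] ∧ y = ![0,0,1]) ∨ (x = ![1,0,1] ∧ y = ![0,1,1]))) ∨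
  (x = ![1,0,0] ∧ y = ![0,1,1]) ∨ (x = ![1,0,1] ∧ y = ![0,0,1])

def RootedFiveCycles {V : Type*} (E : V → V → Prop) : Type _ :=
  {p : Fin 5 → V // Function.Injective p ∧
    (∀ i : Fin 4, E (p i.castSucc) (p i.succ)) ∧ E (p 4) (p 0)}

instance (x y : Fin 3 → Fin 2) : Decidable (deBruijnAdj 2 3 x y) := by
  unfold deBruijnAdj; infer_instance
instance (x y : Fin 3 → Fin 2) : Decidable (modifiedB23Adj x y) := by
  unfold modifiedB23Adj; infer_instance

/-- trajectory determined by a start and 4 choice bits -/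
def traj (s : Fin 8 → Fin 2 → Fin 8) (a : Fin 8) (c : Fin 4 → Fin 2) : Fin 5 → Fin 8 :=
  ![a, s a (c 0), s (s a (c 0)) (c 1), s (s (s a (c 0)) (c 1)) (c 2),
    s (s (s (s a (c 0)) (c 1)) (c 2)) (c 3)]

def Pred {V : Type*} (E : V → V → Prop) (p : Fin 5 → V) : Prop :=
  Function.Injective p ∧ (∀ i : Fin 4, E (p i.castSucc) (p i.succ)) ∧ E (p 4) (p 0)

lemma card_eq (s : Fin 8 → Fin 2 → Fin 8) (E : Fin 8 → Fin 8 → Prop)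
    (hE : ∀ x y, E x y ↔ (s x 0 = y ∨ s x 1 = y))
    (hs : ∀ a, s a 0 ≠ s a 1) :
    Nat.card (RootedFiveCycles E) =
      Nat.card {q : Fin 8 × (Fin 4 → Fin 2) // Pred E (traj s q.1 q.2)} := by
  have sinj : ∀ a (b b' : Fin 2), s a b = s a b' → b = b' := by
    intro a b b' h
    match b, b' with
    | 0, 0 => rfl
    | 1, 1 => rfl
    | 0, 1 => exact absurd h (hs a)
    | 1, 0 => exact absurd h.symm (hs a)
  symm
  apply Nat.card_eq_of_bijective (fun q => ⟨traj s q.1.1 q.1.2, q.2⟩)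
  constructor
  · rintro ⟨⟨a, c⟩, h⟩ ⟨⟨a', c'⟩, h'⟩ hq
    have ht : traj s a c = traj s a' c' := congrArg Subtype.val hq
    have h0 : a = a' := congrFun ht 0
    subst h0
    have h1 : s a (c 0) = s a (c' 0) := congrFun ht 1
    have hc0 : c 0 = c' 0 := sinj _ _ _ h1
    have h2 : s (s a (c' 0)) (c 1) = s (s a (c' 0)) (c' 1) := by
      have := congrFun ht 2; simpa [traj, hc0] using this
    have hc1 : c 1 = c' 1 := sinj _ _ _ h2
    have h3 : s (s (s a (c' 0)) (c' 1)) (c 2)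
        = s (s (s a (c' 0)) (c' 1)) (c' 2) := by
      have := congrFun ht 3; simpa [traj, hc0, hc1] using this
    have hc2 : c 2 = c' 2 := sinj _ _ _ h3
    have h4 : s (s (s (s a (c' 0)) (c' 1)) (c' 2)) (c 3)
        = s (s (s (s a (c' 0)) (c' 1)) (c' 2)) (c' 3) := by
      have := congrFun ht 4; simpa [traj, hc0, hc1, hc2] using this
    have hc3 : c 3 = c' 3 := sinj _ _ _ h4
    have : c = c' := by
      funext i; fin_cases i <;> assumption
    subst this; rfl
  · rintro ⟨p, hp⟩
    obtain ⟨hinj, h1, h2⟩ := hp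
    have step : ∀ x y, E x y → s x (if s x 0 = y then 0 else 1) = y := by
      intro x y hxy
      by_cases h : s x 0 = y
      · simp [h]
      · simp only [h, if_false]
        rcases (hE x y).1 hxy with h' | h'
        · exact absurd h' h
        · exact h'
    set c : Fin 4 → Fin 2 := fun i => if s (p i.castSucc) 0 = p i.succ then 0 else 1 with hc
    have e1 : s (p 0) (c 0) = p 1 := step _ _ (h1 0)
    have e2 : s (p 1) (c 1) = p 2 := step _ _ (h1 1)
    have e3 : s (p 2) (c 2) = p 3 := step _ _ (h1 2)
    have e4 : s (p 3) (c 3) = p 4 := step _ _ (h1 3)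
    have hpt : traj s (p 0) c = p := by
      funext i
      fin_cases i <;> simp [traj, e1, e2, e3, e4]
    exact ⟨⟨⟨p 0, c⟩, by rw [hpt]; exact ⟨hinj, h1, h2⟩⟩, Subtype.ext hpt⟩

def enc : Fin 8 → Fin 3 → Fin 2 :=
  ![![0,0,0],![0,0,1],![0,1,0],![0,1,1],![1,0,0],![1,0,1],![1,1,0],![1,1,1]]

lemma enc_bij : Function.Bijective enc := by decide

noncomputable def encE : Fin 8 ≃ (Fin 3 → Fin 2) := Equiv.ofBijective enc enc_bij

def s1 : Fin 8 → Fin 2 → Fin 8 :=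
  ![![0,1],![2,3],![4,5],![6,7],![0,1],![2,3],![4,5],![6,7]]
def s2 : Fin 8 → Fin 2 → Fin 8 :=
  ![![0,1],![2,3],![4,5],![6,7],![0,3],![2,1],![4,5],![6,7]]

def E1 (a b : Fin 8) : Prop := deBruijnAdj 2 3 (enc a) (enc b)
def E2 (a b : Fin 8) : Prop := modifiedB23Adj (enc a) (enc b)
instance (a b : Fin 8) : Decidable (E1 a b) := by unfold E1; infer_instance
instance (a b : Fin 8) : Decidable (E2 a b) := by unfold E2; infer_instance
instance {V : Type*} (E : V → V → Prop) [DecidableEq V] [∀ x y, Decidable (E x y)]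
    (p : Fin 5 → V) : Decidable (Pred E p) := by unfold Pred; infer_instance
instance (E : Fin 8 → Fin 8 → Prop) (s : Fin 8 → Fin 2 → Fin 8)
    [∀ x y, Decidable (E x y)] : Fintype {q : Fin 8 × (Fin 4 → Fin 2) // Pred E (traj s q.1 q.2)} :=
  Subtype.fintype _

noncomputable def rfc_equiv {V W : Type*} (E : V → V → Prop) (F : W → W → Prop) (e : V ≃ W)
    (he : ∀ x y, E x y ↔ F (e x) (e y)) :
    RootedFiveCycles E ≃ RootedFiveCycles F := by
  refine Equiv.subtypeEquiv (Equiv.arrowCongr (Equiv.refl (Fin 5)) e) ?_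
  intro p
  simp only [Equiv.arrowCongr_apply, Equiv.refl_symm, Equiv.coe_refl,
    Function.comp_apply, Function.comp, id]
  constructor
  · rintro ⟨hinj, h1, h2⟩
    exact ⟨e.injective.comp hinj, fun i => (he _ _).1 (h1 i), (he _ _).1 h2⟩
  · rintro ⟨hinj, h1, h2⟩
    refine ⟨fun a b hab => hinj (by simpa using congrArg e hab),
      fun i => (he _ _).2 (h1 i), (he _ _).2 h2⟩

lemma card1 : Nat.card (RootedFiveCycles (deBruijnAdj 2 3)) = 5 * 2 := by
  have e := rfc_equiv E1 (deBruijnAdj 2 3) encE (fun x y => Iff.rfl)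
  rw [← Nat.card_congr e, card_eq s1 E1 (by decide) (by decide),
    Nat.card_eq_fintype_card]
  decide

lemma card2 : Nat.card (RootedFiveCycles modifiedB23Adj) = 5 * 3 := by
  have e := rfc_equiv E2 modifiedB23Adj encE (fun x y => Iff.rfl)
  rw [← Nat.card_congr e, card_eq s2 E2 (by decide) (by decide),
    Nat.card_eq_fintype_card]
  decide

/-- `B(2,3)` and `B'(2,3)` are not isomorphic: `B(2,3)` has exactly two
directed cycles of length 5 (ten rooted ones), whereas `B'(2,3)` has exactly three
(fifteen rooted ones). -/
theorem stmt19 :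
    (¬ ∃ f : (Fin 3 → Fin 2) ≃ (Fin 3 → Fin 2),
        ∀ x y, deBruijnAdj 2 3 x y ↔ modifiedB23Adj (f x) (f y)) ∧
    Nat.card (RootedFiveCycles (deBruijnAdj 2 3)) = 5 * 2 ∧
    Nat.card (RootedFiveCycles modifiedB23Adj) = 5 * 3 := by
  refine ⟨?_, card1, card2⟩
  rintro ⟨f, hf⟩
  have e := rfc_equiv (deBruijnAdj 2 3) modifiedB23Adj f hf
  have := Nat.card_congr e
  rw [card1, card2] at this
  omega
end
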